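/- arXiv:1206.1945 — 7 statements merged into one kernel-verified Lean document; each statement's English description precedes it below -/
import Mathlib

section
/- For every edge 2-coloring of the complete graph K_4 on four vertices, there exists a nontrivial color-preserving automorphism. (Consequently, no edge 2-coloring of K_4 is free of nontrivial color-preserving symmetries.) -/
/-!
The six edges of `K₄` form three perfect matchings. The double transposition `(a b)(c d)` fixes
the matching `{ab, cd}` and swaps the edges within each of the other two, so it preserves the
coloring as soon as those two matchings are monochromatic. Hence we are done unless two matchings,
say `{ac, bd}` and `{ad, bc}`, are bichromatic; then `(c d)` preserves the coloring if `ac` and `ad`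
have the same color, and `(a b)` does otherwise.
-/

/-- A graph automorphism `φ` of `G` is color-preserving with respect to the
edge 2-coloring `col` (say `true` = grey, `false` = black) if every edge and
its image have the same color. -/
def IsColorPreserving {V : Type*} (G : SimpleGraph V) (col : Sym2 V → Bool)
    (φ : G ≃g G) : Prop :=
  ∀ u v : V, G.Adj u v → col s(φ u, φ v) = col s(u, v)

open SimpleGraph Equiv

theorem swap_mul_swap_ne_one {α : Type*} [DecidableEq α] {a b c d : α}
    (hab : a ≠ b) (hac : a ≠ c) (had : a ≠ d) : swap a b * swap c d ≠ 1 := fun h =>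
  hab (by simpa [swap_apply_of_ne_of_ne hac had] using congr($h a).symm)

variable {V : Type*} {col : Sym2 V → Bool}

theorem isColorPreserving_completeGraph_iff {σ : Perm V} :
    IsColorPreserving (completeGraph V) col (Iso.completeGraph σ) ↔
      ∀ u v, u ≠ v → col s(σ u, σ v) = col s(u, v) :=
  Iff.rfl

variable [DecidableEq V]

theorem isColorPreserving_swap {a b : V}
    (h : ∀ w, w ≠ a → w ≠ b → col s(a, w) = col s(b, w)) :
    IsColorPreserving (completeGraph V) col (Iso.completeGraph (swap a b)) := by
  rw [isColorPreserving_completeGraph_iff]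
  intro u v huv
  by_cases hua : u = a <;> by_cases hub : u = b <;> by_cases hva : v = a <;>
    by_cases hvb : v = b <;> simp_all [swap_apply_of_ne_of_ne, Sym2.eq_swap]

section FourVertices

variable {a b c d : V} (hV : ∀ x, x = a ∨ x = b ∨ x = c ∨ x = d)
include hV

theorem isColorPreserving_swap_mul_swap (hac : a ≠ c) (had : a ≠ d) (hbc : b ≠ c) (hbd : b ≠ d)
    (hacbd : col s(a, c) = col s(b, d)) (hadbc : col s(a, d) = col s(b, c)) :
    IsColorPreserving (completeGraph V) col (Iso.completeGraph (swap a b * swap c d)) := by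
  rw [isColorPreserving_completeGraph_iff]
  intro u v huv
  rcases hV u with rfl | rfl | rfl | rfl <;> rcases hV v with rfl | rfl | rfl | rfl <;>
    simp_all [swap_apply_of_ne_of_ne, Sym2.eq_swap, eq_comm]

theorem exists_perm_ne_one_isColorPreserving_of_ne_of_ne (hab : a ≠ b) (hcd : c ≠ d)
    (hacbd : col s(a, c) ≠ col s(b, d)) (hadbc : col s(a, d) ≠ col s(b, c)) :
    ∃ σ : Perm V, σ ≠ 1 ∧ IsColorPreserving (completeGraph V) col (Iso.completeGraph σ) := by
  by_cases hacad : col s(a, c) = col s(a, d)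
  · refine ⟨swap c d, swap_eq_one_iff.not.mpr hcd, isColorPreserving_swap fun w hwc hwd => ?_⟩
    rcases hV w with rfl | rfl | rfl | rfl <;> simp_all [Sym2.eq_swap, ← Bool.eq_not_iff]
  · refine ⟨swap a b, swap_eq_one_iff.not.mpr hab, isColorPreserving_swap fun w hwa hwb => ?_⟩
    rcases hV w with rfl | rfl | rfl | rfl <;> simp_all [Sym2.eq_swap, ← Bool.eq_not_iff]

theorem exists_perm_ne_one_isColorPreserving
    (hab : a ≠ b) (hac : a ≠ c) (had : a ≠ d) (hbc : b ≠ c) (hbd : b ≠ d) (hcd : c ≠ d) :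
    ∃ σ : Perm V, σ ≠ 1 ∧ IsColorPreserving (completeGraph V) col (Iso.completeGraph σ) := by
  have hV_acbd : ∀ x, x = a ∨ x = c ∨ x = b ∨ x = d := fun x => by have := hV x; tauto
  have hV_adbc : ∀ x, x = a ∨ x = d ∨ x = b ∨ x = c := fun x => by have := hV x; tauto
  by_cases hacbd : col s(a, c) = col s(b, d) <;> by_cases hadbc : col s(a, d) = col s(b, c)
  · exact ⟨_, swap_mul_swap_ne_one hab hac had,
      isColorPreserving_swap_mul_swap hV hac had hbc hbd hacbd hadbc⟩
  · by_cases habcd : col s(a, b) = col s(c, d)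
    · refine ⟨_, swap_mul_swap_ne_one had hab hac,
        isColorPreserving_swap_mul_swap hV_adbc hab hac hbd.symm hcd.symm ?_ ?_⟩
      · rwa [Sym2.eq_swap (a := d)]
      · rwa [Sym2.eq_swap (a := d)]
    · exact exists_perm_ne_one_isColorPreserving_of_ne_of_ne hV_acbd hac hbd habcd
        (by rwa [Sym2.eq_swap (a := c)])
  · by_cases habcd : col s(a, b) = col s(c, d)
    · refine ⟨_, swap_mul_swap_ne_one hac hab had,
        isColorPreserving_swap_mul_swap hV_acbd hab had hbc.symm hcd habcd ?_⟩
      rwa [Sym2.eq_swap (a := c)]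
    · exact exists_perm_ne_one_isColorPreserving_of_ne_of_ne hV_adbc had hbc
        (by rwa [Sym2.eq_swap (a := d)]) (by rwa [Sym2.eq_swap (a := d)])
  · exact exists_perm_ne_one_isColorPreserving_of_ne_of_ne hV hab hcd hacbd hadbc

end FourVertices

/-- For every edge 2-coloring of the complete graph `K₄`, there exists a
nontrivial color-preserving automorphism. -/
theorem stmt_0 (col : Sym2 (Fin 4) → Bool) :
    ∃ φ : SimpleGraph.completeGraph (Fin 4) ≃g SimpleGraph.completeGraph (Fin 4),
      (∃ x, φ x ≠ x) ∧ IsColorPreserving (SimpleGraph.completeGraph (Fin 4)) col φ := by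
  obtain ⟨σ, hσ, hcol⟩ := exists_perm_ne_one_isColorPreserving (col := col)
    (a := 0) (b := 1) (c := 2) (d := 3) (by decide) (by decide) (by decide) (by decide)
    (by decide) (by decide) (by decide)
  exact ⟨Iso.completeGraph σ, not_forall.mp fun h => hσ (Equiv.ext h), hcol⟩
end

section
/- For every edge 2-coloring of the complete bipartite graph K_{2,4}, there exists a nontrivial color-preserving automorphism. -/
/-!
Record for each vertex `b` of the large side of `K_{α,β}` its profile: the colors of the edges
from `b` to the small side, a function `α → Bool`. If two vertices of the large side share a
profile, swapping them preserves colors. Otherwise, when `2 ^ |α| ≤ |β|`, the profile is a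
bijection from `β` onto `α → Bool`, so any permutation of the small side, such as a
transposition, lifts to a color-preserving automorphism by permuting the large side accordingly.
-/

open SimpleGraph Function

namespace completeBipartiteGraph

variable {α β : Type*}

def edgeProfile (col : Sym2 (α ⊕ β) → Bool) (b : β) (a : α) : Bool :=
  col s(.inl a, .inr b)

theorem isColorPreserving_congr {col : Sym2 (α ⊕ β) → Bool} {ea : α ≃ α} {eb : β ≃ β}
    (h : ∀ b, edgeProfile col (eb b) ∘ ea = edgeProfile col b) :
    IsColorPreserving (completeBipartiteGraph α β) col (completeBipartiteGraphCongr ea eb) := by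
  have hedge (a : α) (b : β) : col s(.inl (ea a), .inr (eb b)) = col s(.inl a, .inr b) :=
    congrFun (h b) a
  rintro (a | b) (a' | b') hadj
  · simp at hadj
  · exact hedge a b'
  · rw [Sym2.eq_swap, Sym2.eq_swap (a := Sum.inr b)]
    exact hedge a' b
  · simp at hadj

theorem isColorPreserving_swap_of_edgeProfile_eq [DecidableEq β] {col : Sym2 (α ⊕ β) → Bool}
    {b b' : β}
    (h : edgeProfile col b = edgeProfile col b') :
    IsColorPreserving (completeBipartiteGraph α β) col
      (completeBipartiteGraphCongr (Equiv.refl α) (Equiv.swap b b')) :=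
  isColorPreserving_congr fun c => Equiv.apply_swap_eq_self (v := edgeProfile col) h c

theorem exists_isColorPreserving_congr_of_bijective {col : Sym2 (α ⊕ β) → Bool}
    (h : Bijective (edgeProfile col)) (ea : α ≃ α) :
    ∃ eb : β ≃ β,
      IsColorPreserving (completeBipartiteGraph α β) col (completeBipartiteGraphCongr ea eb) := by
  set e := Equiv.ofBijective _ h
  refine ⟨(e.trans (ea.arrowCongr (Equiv.refl Bool))).trans e.symm, isColorPreserving_congr ?_⟩
  intro b
  calc e (e.symm (ea.arrowCongr (Equiv.refl Bool) (e b))) ∘ ea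
      = (edgeProfile col b ∘ ea.symm) ∘ ea := congrArg (· ∘ ea) (e.apply_symm_apply _)
    _ = edgeProfile col b := by rw [comp_assoc, ea.symm_comp_self, comp_id]

theorem exists_nontrivial_isColorPreserving [Finite α] [Nontrivial α] [Finite β]
    (hcard : Nat.card (α → Bool) ≤ Nat.card β) (col : Sym2 (α ⊕ β) → Bool) :
    ∃ φ : completeBipartiteGraph α β ≃g completeBipartiteGraph α β,
      (∃ x, φ x ≠ x) ∧ IsColorPreserving (completeBipartiteGraph α β) col φ := by
  classical
  by_cases hinj : Injective (edgeProfile col)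
  · obtain ⟨a, a', hne⟩ := exists_pair_ne α
    obtain ⟨eb, hcol⟩ :=
      exists_isColorPreserving_congr_of_bijective (hinj.bijective_of_nat_card_le hcard)
        (Equiv.swap a a')
    exact ⟨_, ⟨.inl a, by simp [hne.symm]⟩, hcol⟩
  · obtain ⟨b, b', hprofile, hne⟩ := not_injective_iff.mp hinj
    exact ⟨_, ⟨.inr b, by simp [hne.symm]⟩,
      isColorPreserving_swap_of_edgeProfile_eq hprofile⟩

end completeBipartiteGraph

/-- For every edge 2-coloring of the complete bipartite graph `K_{2,4}`, there
exists a nontrivial color-preserving automorphism. -/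
theorem stmt_1 (col : Sym2 (Fin 2 ⊕ Fin 4) → Bool) :
    ∃ φ : completeBipartiteGraph (Fin 2) (Fin 4) ≃g completeBipartiteGraph (Fin 2) (Fin 4),
      (∃ x, φ x ≠ x) ∧ IsColorPreserving (completeBipartiteGraph (Fin 2) (Fin 4)) col φ :=
  completeBipartiteGraph.exists_nontrivial_isColorPreserving (by simp) col
end

section
/- Let n be 3, 4, or 5. For every edge 2-coloring of the cycle graph C_n, there exists a nontrivial color-preserving automorphism. -/
/-- For `n ≥ 3`, the cycle graph `Cₙ` on the vertex set `ZMod n`: `i` and `j`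
are adjacent if and only if `j = i + 1` or `i = j + 1`. -/
def cycleGraph (n : ℕ) (hn : 3 ≤ n) : SimpleGraph (ZMod n) where
  Adj i j := j = i + 1 ∨ i = j + 1
  symm := ⟨fun i j h => h.symm⟩
  loopless := by
    constructor
    intro i h
    haveI : Fact (1 < n) := ⟨by omega⟩
    have h1 : (0 : ZMod n) = 1 := by
      rcases h with h | h <;>
        · nth_rewrite 1 [show i = i + 0 by ring] at h
          exact add_left_cancel h
    exact zero_ne_one h1

open Finset

theorem Finset.exists_sub_mem_iff_of_card_le_two {G : Type*} [AddCommGroup G] {S : Finset G}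
    (hS : #S ≤ 2) : ∃ m : G, ∀ w, m - w ∈ S ↔ w ∈ S := by
  classical
  interval_cases h : #S
  · obtain rfl := card_eq_zero.mp h
    exact ⟨0, by simp⟩
  · obtain ⟨u, rfl⟩ := card_eq_one.mp h
    exact ⟨u + u, fun w => by simp only [mem_singleton]; grind⟩
  · obtain ⟨u, v, -, rfl⟩ := card_eq_two.mp h
    exact ⟨u + v, fun w => by simp only [mem_insert, mem_singleton]; grind⟩

theorem exists_sub_invariant_of_card_le_five {G : Type*} [AddCommGroup G] [Fintype G]
    (hG : Fintype.card G ≤ 5) (f : G → Bool) : ∃ m : G, ∀ w, f (m - w) = f w := by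
  classical
  set S := univ.filter (f · = true)
  have hS : ∃ m, ∀ w, m - w ∈ S ↔ w ∈ S := by
    have hcard := card_compl S
    by_cases h : #S ≤ 2
    · exact exists_sub_mem_iff_of_card_le_two h
    · obtain ⟨m, hm⟩ := exists_sub_mem_iff_of_card_le_two (S := Sᶜ) (by omega)
      exact ⟨m, fun w => by simpa only [mem_compl, not_iff_not] using hm w⟩
  obtain ⟨m, hm⟩ := hS
  exact ⟨m, fun w => Bool.eq_iff_iff.mpr (by simpa [S] using hm w)⟩

theorem ZMod.two_ne_zero_of_three_le {n : ℕ} (hn : 3 ≤ n) : (2 : ZMod n) ≠ 0 := by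
  rw [← Nat.cast_ofNat, Ne, ZMod.natCast_eq_zero_iff]
  exact fun h => by have := Nat.le_of_dvd two_pos h; omega

namespace CycleGraph

variable {n : ℕ} {hn : 3 ≤ n}

def reflection (hn : 3 ≤ n) (k : ZMod n) : cycleGraph n hn ≃g cycleGraph n hn where
  toEquiv := Equiv.subLeft k
  map_rel_iff' {x y} := by
    change (k - y = k - x + 1 ∨ k - x = k - y + 1) ↔ (y = x + 1 ∨ x = y + 1)
    grind

theorem reflection_apply (k x : ZMod n) : reflection hn k x = k - x := rfl

theorem exists_reflection_apply_ne (k : ZMod n) : ∃ x, reflection hn k x ≠ x := by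
  by_contra! h
  have h0 : k - 0 = 0 := h 0
  have h1 : k - 1 = 1 := h 1
  exact ZMod.two_ne_zero_of_three_le hn (by linear_combination h0 - h1)

theorem isColorPreserving_reflection (col : Sym2 (ZMod n) → Bool) (k : ZMod n)
    (hk : ∀ u, col s(k - 1 - u, k - 1 - u + 1) = col s(u, u + 1)) :
    IsColorPreserving (cycleGraph n hn) col (reflection hn k) := by
  have edge (u : ZMod n) : col s(k - u, k - (u + 1)) = col s(u, u + 1) := by
    rw [← hk u, Sym2.eq_swap]
    congr 2 <;> ring
  rintro u v (rfl | rfl)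
  · exact edge u
  · simpa only [reflection_apply, Sym2.eq_swap (a := v + 1), Sym2.eq_swap (a := k - (v + 1))]
      using edge v

end CycleGraph

/-- Let `n` be 3, 4 or 5.  For every edge 2-coloring of the cycle graph `Cₙ`
there exists a nontrivial color-preserving automorphism. -/
theorem stmt_2 (n : ℕ) (hn : n = 3 ∨ n = 4 ∨ n = 5) (col : Sym2 (ZMod n) → Bool) :
    ∃ φ : cycleGraph n (by omega) ≃g cycleGraph n (by omega),
      (∃ x, φ x ≠ x) ∧ IsColorPreserving (cycleGraph n (by omega)) col φ := by
  have h3 : 3 ≤ n := by omega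
  have : NeZero n := ⟨by omega⟩
  obtain ⟨m, hm⟩ := exists_sub_invariant_of_card_le_five (by rw [ZMod.card]; omega)
    (fun u : ZMod n => col s(u, u + 1))
  refine ⟨CycleGraph.reflection h3 (m + 1), CycleGraph.exists_reflection_apply_ne _,
    CycleGraph.isColorPreserving_reflection col _ fun u => ?_⟩
  simpa only [add_sub_cancel_right] using hm u
end

section
/- Let G be an acyclic simple graph (a forest) with vertices v, a, b, e, c, d such that a, b, e are pairwise distinct, c ≠ v, d ≠ v, and G contains the edges va, vb, ve, ac, and bd. Color the four edges ca, av, ve, and bd grey and all other edges of G black. Then every color-preserving automorphism of this 2-colored graph fixes each of the vertices v, a, b, e, c, and d. -/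
namespace SimpleGraph

variable {V : Type*} {G : SimpleGraph V}

theorem IsAcyclic.not_adj_of_adj_of_adj (hG : G.IsAcyclic) {x y z : V}
    (hxy : G.Adj x y) (hyz : G.Adj y z) : ¬ G.Adj x z := by
  classical
  exact fun hxz => hG.cliqueFree le_rfl {x, y, z} (is3Clique_triple_iff.mpr ⟨hxy, hxz, hyz⟩)

theorem IsAcyclic.eq_of_adj_of_adj_of_adj_of_adj (hG : G.IsAcyclic) {x y z w : V}
    (hxy : G.Adj x y) (hyz : G.Adj y z) (hxw : G.Adj x w) (hwz : G.Adj w z) (hxz : x ≠ z) :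
    y = w := by
  have hp : (Walk.cons hxy (Walk.cons hyz .nil)).IsPath := by simp [hxy.ne, hyz.ne, hxz]
  have hq : (Walk.cons hxw (Walk.cons hwz .nil)).IsPath := by simp [hxw.ne, hwz.ne, hxz]
  simpa using congrArg (fun p : G.Path x z => p.1.support)
    ((hG.subsingleton_path x z).elim ⟨_, hp⟩ ⟨_, hq⟩)

end SimpleGraph

open SimpleGraph

def colorSubgraph {V : Type*} (G : SimpleGraph V) (col : Sym2 V → Bool) (k : Bool) :
    SimpleGraph V where
  Adj x y := G.Adj x y ∧ col s(x, y) = k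
  symm := ⟨fun _ _ h => ⟨h.1.symm, Sym2.eq_swap ▸ h.2⟩⟩
  loopless := ⟨fun _ h => h.1.ne rfl⟩

theorem IsColorPreserving.map_colorSubgraph_adj {V : Type*} {G : SimpleGraph V}
    {col : Sym2 V → Bool} {φ : G ≃g G} (hφ : IsColorPreserving G col φ) {k : Bool} {x y : V}
    (h : (colorSubgraph G col k).Adj x y) : (colorSubgraph G col k).Adj (φ x) (φ y) :=
  ⟨φ.map_adj_iff.mpr h.1, (hφ x y h.1).trans h.2⟩

section GreyGraph

variable {V : Type*} {c a v e b d : V}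

def greyGraph (c a v e b d : V) : SimpleGraph V :=
  fromEdgeSet {s(c, a), s(a, v), s(v, e), s(b, d)}

theorem colorSubgraph_le_greyGraph [DecidableEq V] (G : SimpleGraph V) :
    colorSubgraph G (fun ed => decide (ed = s(c, a) ∨ ed = s(a, v) ∨ ed = s(v, e) ∨ ed = s(b, d)))
      true ≤ greyGraph c a v e b d := fun _ _ h => by
  simpa [greyGraph, h.1.ne] using h.2

theorem eq_of_greyGraph_adj {x y : V} (h : (greyGraph c a v e b d).Adj x y) :
    x = c ∨ x = a ∨ x = v ∨ x = e ∨ x = b ∨ x = d := by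
  simp only [greyGraph, fromEdgeSet_adj, Set.mem_insert_iff, Set.mem_singleton_iff,
    Sym2.eq_iff] at h
  grind

variable (hnd : [c, a, v, e, b, d].Nodup)
include hnd

theorem greyGraph_neighbor_of_a {y : V} (h : (greyGraph c a v e b d).Adj a y) :
    y = c ∨ y = v := by
  simp only [greyGraph, fromEdgeSet_adj, Set.mem_insert_iff, Set.mem_singleton_iff,
    Sym2.eq_iff] at h
  simp only [List.nodup_cons, List.mem_cons, List.not_mem_nil] at hnd
  grind

theorem greyGraph_neighbor_of_v {y : V} (h : (greyGraph c a v e b d).Adj v y) :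
    y = a ∨ y = e := by
  simp only [greyGraph, fromEdgeSet_adj, Set.mem_insert_iff, Set.mem_singleton_iff,
    Sym2.eq_iff] at h
  simp only [List.nodup_cons, List.mem_cons, List.not_mem_nil] at hnd
  grind

theorem greyGraph_eq_a_or_v_of_adj_of_adj {x y z : V} (hy : (greyGraph c a v e b d).Adj x y)
    (hz : (greyGraph c a v e b d).Adj x z) (hyz : y ≠ z) : x = a ∨ x = v := by
  simp only [greyGraph, fromEdgeSet_adj, Set.mem_insert_iff, Set.mem_singleton_iff,
    Sym2.eq_iff] at hy hz
  simp only [List.nodup_cons, List.mem_cons, List.not_mem_nil] at hnd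
  grind

theorem greyGraph_path_fixed_or_reversed {f : V → V}
    (hf : f.Injective) (hca : (greyGraph c a v e b d).Adj (f c) (f a))
    (hav : (greyGraph c a v e b d).Adj (f a) (f v))
    (hve : (greyGraph c a v e b d).Adj (f v) (f e)) :
    (f c = c ∧ f a = a ∧ f v = v ∧ f e = e) ∨ (f c = e ∧ f a = v ∧ f v = a ∧ f e = c) := by
  have hcv_ne : c ≠ v := by simp_all
  obtain ⟨hav_ne, hae_ne⟩ : a ≠ v ∧ a ≠ e := by simp_all
  rcases greyGraph_eq_a_or_v_of_adj_of_adj hnd hav.symm hve (hf.ne hae_ne) with hfv | hfv <;>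
    rcases greyGraph_eq_a_or_v_of_adj_of_adj hnd hca.symm hav (hf.ne hcv_ne) with hfa | hfa
  · exact absurd (hf (hfa.trans hfv.symm)) hav_ne
  · rw [hfv] at hve
    rw [hfa] at hca
    have hfe := (greyGraph_neighbor_of_a hnd hve).resolve_right (hfa ▸ hf.ne hae_ne.symm)
    have hfc := (greyGraph_neighbor_of_v hnd hca.symm).resolve_left (hfv ▸ hf.ne hcv_ne)
    exact .inr ⟨hfc, hfa, hfv, hfe⟩
  · rw [hfv] at hve
    rw [hfa] at hca
    have hfe := (greyGraph_neighbor_of_v hnd hve).resolve_left (hfa ▸ hf.ne hae_ne.symm)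
    have hfc := (greyGraph_neighbor_of_a hnd hca.symm).resolve_right (hfv ▸ hf.ne hcv_ne)
    exact .inl ⟨hfc, hfa, hfv, hfe⟩
  · exact absurd (hf (hfa.trans hfv.symm)) hav_ne

theorem greyGraph_edge_fixed_or_swapped {f : V → V} (hf : f.Injective)
    (hpath : (f c = c ∧ f a = a ∧ f v = v ∧ f e = e) ∨ (f c = e ∧ f a = v ∧ f v = a ∧ f e = c))
    (hbd : (greyGraph c a v e b d).Adj (f b) (f d)) :
    (f b = b ∧ f d = d) ∨ (f b = d ∧ f d = b) := by
  have hb := eq_of_greyGraph_adj hbd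
  have hd := eq_of_greyGraph_adj hbd.symm
  simp only [List.nodup_cons, List.mem_cons, List.not_mem_nil] at hnd
  grind [hf.eq_iff]

end GreyGraph

theorem nodup_of_isAcyclic {V : Type*} {G : SimpleGraph V} (hacyc : G.IsAcyclic) {v a b e c d : V}
    (hab : a ≠ b) (hae : a ≠ e) (hbe : b ≠ e) (hcv : c ≠ v) (hdv : d ≠ v)
    (hva : G.Adj v a) (hvb : G.Adj v b) (hve : G.Adj v e)
    (hac : G.Adj a c) (hbd : G.Adj b d) : [c, a, v, e, b, d].Nodup := by
  have hce : c ≠ e := fun h => hacyc.not_adj_of_adj_of_adj hva.symm hve (h ▸ hac)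
  have hcb : c ≠ b := fun h => hacyc.not_adj_of_adj_of_adj hva.symm hvb (h ▸ hac)
  have hda : d ≠ a := fun h => hacyc.not_adj_of_adj_of_adj hvb.symm hva (h ▸ hbd)
  have hde : d ≠ e := fun h => hacyc.not_adj_of_adj_of_adj hvb.symm hve (h ▸ hbd)
  have hcd : c ≠ d := fun h =>
    hab (hacyc.eq_of_adj_of_adj_of_adj_of_adj hva hac hvb (h ▸ hbd) hcv.symm)
  simp only [List.nodup_cons, List.mem_cons, List.not_mem_nil, List.nodup_nil]
  grind [hva.ne, hvb.ne, hve.ne, hac.ne, hbd.ne]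

/-- Let `G` be an acyclic simple graph (a forest) with vertices `v, a, b, e,
c, d` such that `a`, `b`, `e` are pairwise distinct, `c ≠ v`, `d ≠ v`, and
`G` contains the edges `va`, `vb`, `ve`, `ac`, `bd`.  Color the four edges
`ca`, `av`, `ve`, `bd` grey and all other edges black.  Then every
color-preserving automorphism fixes each of `v`, `a`, `b`, `e`, `c`, `d`. -/
theorem stmt_9 {V : Type*} [DecidableEq V] (G : SimpleGraph V)
    (hacyc : G.IsAcyclic) (v a b e c d : V)
    (hab : a ≠ b) (hae : a ≠ e) (hbe : b ≠ e) (hcv : c ≠ v) (hdv : d ≠ v)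
    (hva : G.Adj v a) (hvb : G.Adj v b) (hve : G.Adj v e)
    (hac : G.Adj a c) (hbd : G.Adj b d)
    (φ : G ≃g G)
    (hφ : IsColorPreserving G
      (fun ed => decide (ed = s(c, a) ∨ ed = s(a, v) ∨ ed = s(v, e) ∨ ed = s(b, d))) φ) :
    φ v = v ∧ φ a = a ∧ φ b = b ∧ φ e = e ∧ φ c = c ∧ φ d = d := by
  have hnd := nodup_of_isAcyclic hacyc hab hae hbe hcv hdv hva hvb hve hac hbd
  have grey : ∀ {x y}, G.Adj x y → (s(x, y) = s(c, a) ∨ s(x, y) = s(a, v) ∨ s(x, y) = s(v, e) ∨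
      s(x, y) = s(b, d)) → (greyGraph c a v e b d).Adj (φ x) (φ y) := fun hxy hgrey =>
    colorSubgraph_le_greyGraph G (hφ.map_colorSubgraph_adj ⟨hxy, by simpa using hgrey⟩)
  have hpath := greyGraph_path_fixed_or_reversed hnd φ.injective (grey hac.symm (by simp))
    (grey hva.symm (by simp)) (grey hve (by simp))
  have hG : G.Adj (φ v) (φ b) := φ.map_adj_iff.mpr hvb
  rcases greyGraph_edge_fixed_or_swapped hnd φ.injective hpath (grey hbd (by simp))
    with ⟨hφb, hφd⟩ | ⟨hφb, hφd⟩ <;> rcases hpath with ⟨hφc, hφa, hφv, hφe⟩ | ⟨hφc, hφa, hφv, hφe⟩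
  · exact ⟨hφv, hφa, hφb, hφe, hφc, hφd⟩
  · rw [hφv, hφb] at hG
    exact absurd hG (hacyc.not_adj_of_adj_of_adj hva.symm hvb)
  · rw [hφv, hφb] at hG
    exact absurd hG (hacyc.not_adj_of_adj_of_adj hvb hbd)
  · rw [hφv, hφb] at hG
    exact absurd (hacyc.eq_of_adj_of_adj_of_adj_of_adj hva hG hvb hbd hdv.symm) hab
end

section
/- Let G be a finite connected acyclic simple graph (a tree). Suppose that every vertex of degree at least 3 has at most one neighbor of degree at least 2. Then G has at most two vertices of degree at least 3; that is, there do not exist three pairwise distinct vertices of G each of degree at least 3. -/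
/-!
Join two of the vertices of degree at least 3 by a path `P`. Every vertex of `P` has degree at
least 2, so the third vertex `x` cannot lie on `P`: as an interior vertex it would have two
neighbours of degree at least 2 on `P`. A path from `x` to `P` enters `P` along an edge `u m`, with
`u` off `P`; as a vertex of a path between vertices of degree at least 3, `u` has degree at least 2. Then `m` has degree at least 3
(as an end of `P` by assumption, as an interior vertex because of its two neighbours on `P` and
`u`), yet it has two neighbours of degree at least 2: `u` and a neighbour on `P`.
-/

namespace SimpleGraph

variable {V : Type*} {G : SimpleGraph V}

lemma two_le_degree_of_adj {v w₁ w₂ : V} [Fintype (G.neighborSet v)] (h₁ : G.Adj v w₁)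
    (h₂ : G.Adj v w₂) (hne : w₁ ≠ w₂) : 2 ≤ G.degree v := by
  rw [← card_neighborFinset_eq_degree]
  exact Finset.one_lt_card.2 ⟨w₁, by simpa, w₂, by simpa, hne⟩

lemma three_le_degree_of_adj {v w₁ w₂ w₃ : V} [Fintype (G.neighborSet v)] (h₁ : G.Adj v w₁)
    (h₂ : G.Adj v w₂) (h₃ : G.Adj v w₃) (h₁₂ : w₁ ≠ w₂) (h₁₃ : w₁ ≠ w₃) (h₂₃ : w₂ ≠ w₃) :
    3 ≤ G.degree v := by
  rw [← card_neighborFinset_eq_degree]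
  exact Finset.two_lt_card.2 ⟨w₁, by simpa, w₂, by simpa, w₃, by simpa, h₁₂, h₁₃, h₂₃⟩

namespace Walk

variable {u v w : V}

lemma exists_adj_mem_support {p : G.Walk u w} (hp : ¬ p.Nil) (hv : v ∈ p.support) :
    ∃ w' ∈ p.support, G.Adj v w' := by
  obtain ⟨n, rfl, hn⟩ := mem_support_iff_exists_getVert.1 hv
  rcases hn.lt_or_eq with hlt | rfl
  · exact ⟨_, p.getVert_mem_support _, p.adj_getVert_succ hlt⟩
  · have hpos : 0 < p.length := not_nil_iff_lt_length.1 hp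
    refine ⟨_, p.getVert_mem_support (p.length - 1), ?_⟩
    simpa [Nat.sub_add_cancel hpos] using (p.adj_getVert_succ (i := p.length - 1) (by omega)).symm

lemma IsPath.exists_adj_adj_of_mem_support {p : G.Walk u w} (hp : p.IsPath)
    (hv : v ∈ p.support) (hvu : v ≠ u) (hvw : v ≠ w) :
    ∃ w₁ ∈ p.support, ∃ w₂ ∈ p.support, w₁ ≠ w₂ ∧ G.Adj v w₁ ∧ G.Adj v w₂ := by
  obtain ⟨n, rfl, hn⟩ := mem_support_iff_exists_getVert.1 hv
  have hn₀ : n ≠ 0 := by rintro rfl; simp at hvu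
  have hnl : n ≠ p.length := by rintro rfl; simp at hvw
  refine ⟨_, p.getVert_mem_support (n - 1), _, p.getVert_mem_support (n + 1), ?_, ?_,
    p.adj_getVert_succ (by omega)⟩
  · intro h
    have := hp.getVert_injOn (by simp only [Set.mem_ofPred_eq]; omega)
      (by simp only [Set.mem_ofPred_eq]; omega) h
    omega
  · simpa [Nat.sub_add_cancel (Nat.pos_of_ne_zero hn₀)] using
      (p.adj_getVert_succ (i := n - 1) (by omega)).symm

lemma IsPath.two_le_degree_of_mem_support [G.LocallyFinite] {p : G.Walk u w} (hp : p.IsPath)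
    (hu : 2 ≤ G.degree u) (hw : 2 ≤ G.degree w) (hv : v ∈ p.support) : 2 ≤ G.degree v := by
  by_cases hvu : v = u
  · exact hvu ▸ hu
  by_cases hvw : v = w
  · exact hvw ▸ hw
  obtain ⟨w₁, -, w₂, -, hne, h₁, h₂⟩ := hp.exists_adj_adj_of_mem_support hv hvu hvw
  exact two_le_degree_of_adj h₁ h₂ hne

end Walk

end SimpleGraph

open SimpleGraph

theorem stmt_10_general {V : Type*} [Fintype V] (G : SimpleGraph V)
    [DecidableRel G.Adj] (hconn : G.Connected)
    (hdeg : ∀ v w₁ w₂ : V, 3 ≤ G.degree v → G.Adj v w₁ → G.Adj v w₂ →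
      2 ≤ G.degree w₁ → 2 ≤ G.degree w₂ → w₁ = w₂) :
    ¬ ∃ x y z : V, x ≠ y ∧ x ≠ z ∧ y ≠ z ∧
      3 ≤ G.degree x ∧ 3 ≤ G.degree y ∧ 3 ≤ G.degree z := by
  rintro ⟨x, y, z, hxy, hxz, hyz, hx, hy, hz⟩
  obtain ⟨P, hP⟩ := hconn.preconnected.exists_isPath y z
  have hdegP : ∀ v ∈ P.support, 2 ≤ G.degree v := fun v ↦
    hP.two_le_degree_of_mem_support (by omega) (by omega)
  have hxP : x ∉ P.support := fun hxP ↦ by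
    obtain ⟨w₁, hw₁, w₂, hw₂, hne, h₁, h₂⟩ := hP.exists_adj_adj_of_mem_support hxP hxy hxz
    exact hne (hdeg x w₁ w₂ hx h₁ h₂ (hdegP w₁ hw₁) (hdegP w₂ hw₂))
  obtain ⟨Q, hQ⟩ := hconn.preconnected.exists_isPath x y
  obtain ⟨⟨⟨u, m⟩, hum⟩, hd, huP, hmP⟩ :=
    Q.exists_boundary_dart {v | v ∉ P.support} hxP (by simp)
  simp only [Set.mem_ofPred_eq, not_not] at huP hmP
  have hu : 2 ≤ G.degree u :=
    hQ.two_le_degree_of_mem_support (by omega) (by omega) (Q.dart_fst_mem_support_of_mem_darts hd)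
  have hm : 3 ≤ G.degree m := by
    by_cases hmy : m = y
    · exact hmy ▸ hy
    by_cases hmz : m = z
    · exact hmz ▸ hz
    obtain ⟨w₁, hw₁, w₂, hw₂, hne, h₁, h₂⟩ := hP.exists_adj_adj_of_mem_support hmP hmy hmz
    exact three_le_degree_of_adj hum.symm h₁ h₂ (ne_of_mem_of_not_mem hw₁ huP).symm
      (ne_of_mem_of_not_mem hw₂ huP).symm hne
  obtain ⟨w, hw, hmw⟩ := P.exists_adj_mem_support (Walk.not_nil_of_ne hyz) hmP
  exact huP (hdeg m u w hm hum.symm hmw hu (hdegP w hw) ▸ hw)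

/-- Let `G` be a finite connected acyclic simple graph (a tree).  Suppose that
every vertex of degree at least 3 has at most one neighbor of degree at
least 2.  Then `G` has at most two vertices of degree at least 3. -/
theorem stmt_10 {V : Type*} [Fintype V] [DecidableEq V] (G : SimpleGraph V)
    [DecidableRel G.Adj] (hconn : G.Connected) (hacyc : G.IsAcyclic)
    (hdeg : ∀ v w₁ w₂ : V, 3 ≤ G.degree v → G.Adj v w₁ → G.Adj v w₂ →
      2 ≤ G.degree w₁ → 2 ≤ G.degree w₂ → w₁ = w₂) :
    ¬ ∃ x y z : V, x ≠ y ∧ x ≠ z ∧ y ≠ z ∧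
      3 ≤ G.degree x ∧ 3 ≤ G.degree y ∧ 3 ≤ G.degree z :=
  stmt_10_general G hconn hdeg
end

section
/- Let m ≥ 5 and consider the complete bipartite graph K_{2,m} with parts {a, c} and {u₁, ..., u_m}. Color grey the edges au_i for all i ∉ {1, 3} together with the edges cu₂ and cu₃, and color all other edges black. Then every color-preserving automorphism of this 2-colored graph fixes each of the vertices a, c, u₁, u₂, and u₃. -/
namespace completeBipartiteGraph

variable {α β : Type*} [Fintype α] [Fintype β]

theorem isLeft_iso_inl (h : Fintype.card α < Fintype.card β)
    (φ : completeBipartiteGraph α β ≃g completeBipartiteGraph α β) (x : α) :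
    (φ (Sum.inl x)).isLeft := by
  rcases hx : φ (Sum.inl x) with y | j
  · rfl
  · exfalso
    have hleft (k : β) : ∃ y, φ (Sum.inr k) = Sum.inl y := by
      have hadj := φ.map_adj_iff.mpr
        (show (completeBipartiteGraph α β).Adj (.inl x) (.inr k) by simp)
      rw [hx] at hadj
      rcases hk : φ (Sum.inr k) with y | k'
      · exact ⟨y, rfl⟩
      · simp [hk] at hadj
    choose τ hτ using hleft
    have hτinj : Function.Injective τ := fun k k' hkk' =>
      Sum.inr_injective (φ.injective (by rw [hτ, hτ, hkk']))
    exact (Fintype.card_le_of_injective τ hτinj).not_gt h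

theorem isRight_iso_inr [Nonempty α] (h : Fintype.card α < Fintype.card β)
    (φ : completeBipartiteGraph α β ≃g completeBipartiteGraph α β) (j : β) :
    (φ (Sum.inr j)).isRight := by
  obtain ⟨x⟩ := ‹Nonempty α›
  have hadj := φ.map_adj_iff.mpr
    (show (completeBipartiteGraph α β).Adj (.inl x) (.inr j) by simp)
  have hx := isLeft_iso_inl h φ x
  revert hadj hx
  cases φ (Sum.inl x) <;> cases φ (Sum.inr j) <;> simp

theorem exists_iso_eq_sumMap [Nonempty α] (h : Fintype.card α < Fintype.card β)
    (φ : completeBipartiteGraph α β ≃g completeBipartiteGraph α β) :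
    ∃ (σ : α → α) (τ : β → β), σ.Injective ∧ τ.Injective ∧ ⇑φ = Sum.map σ τ := by
  choose σ hσ using fun x => Sum.isLeft_iff.mp (isLeft_iso_inl h φ x)
  choose τ hτ using fun j => Sum.isRight_iff.mp (isRight_iso_inr h φ j)
  have hφ : ⇑φ = Sum.map σ τ := by
    ext (x | j) <;> simp [hσ, hτ]
  refine ⟨σ, τ, fun x x' hxx' => ?_, fun j j' hjj' => ?_, hφ⟩
  · exact Sum.inl_injective (φ.injective (by rw [hσ, hσ, hxx']))
  · exact Sum.inr_injective (φ.injective (by rw [hτ, hτ, hjj']))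

end completeBipartiteGraph

/-- Row `0` is `a`, row `1` is `c`; column `j` is `u_{j+1}`. -/
def IsGrey {m : ℕ} : Fin 2 → Fin m → Prop
  | 0, j => j.val ≠ 0 ∧ j.val ≠ 2
  | 1, j => j.val = 1 ∨ j.val = 2

theorem isGrey_iff {m : ℕ} {i₀ i₁ i₂ : Fin m} (h₀ : i₀.val = 0) (h₁ : i₁.val = 1)
    (h₂ : i₂.val = 2) (x : Fin 2) (j : Fin m) :
    ((∃ i : Fin m, i ≠ i₀ ∧ i ≠ i₂ ∧
        s(Sum.inl x, Sum.inr j) = (s(Sum.inl 0, Sum.inr i) : Sym2 (Fin 2 ⊕ Fin m))) ∨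
      s(Sum.inl x, Sum.inr j) = s(Sum.inl 1, Sum.inr i₁) ∨
      s(Sum.inl x, Sum.inr j) = s(Sum.inl 1, Sum.inr i₂)) ↔ IsGrey x j := by
  fin_cases x <;> simp [IsGrey] <;> simp [Fin.ext_iff, h₀, h₁, h₂]

theorem eq_zero_of_injective_isGrey {m : ℕ} (hm : 5 ≤ m) {τ : Fin m → Fin m}
    (hτ : τ.Injective) {x : Fin 2} (h : ∀ j, IsGrey 0 j → IsGrey x (τ j)) : x = 0 := by
  by_contra hx
  obtain rfl : x = 1 := Fin.eq_one_of_ne_zero x hx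
  have hmaps : Set.MapsTo τ ({⟨1, by omega⟩, ⟨3, by omega⟩, ⟨4, by omega⟩} : Finset (Fin m))
      ({⟨1, by omega⟩, ⟨2, by omega⟩} : Finset (Fin m)) := by
    intro j hj
    simp only [Finset.coe_insert, Finset.coe_singleton, Set.mem_insert_iff,
      Set.mem_singleton_iff, Fin.ext_iff] at hj ⊢
    exact h j (by simp only [IsGrey]; omega)
  have := Finset.card_le_card_of_injOn τ hmaps hτ.injOn
  simp [Finset.card_insert_of_notMem, Fin.ext_iff] at this

theorem eq_of_isGrey_iff {m : ℕ} {j k : Fin m} (hj : j.val < 3)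
    (h0 : IsGrey 0 k ↔ IsGrey 0 j) (h1 : IsGrey 1 k ↔ IsGrey 1 j) : k = j := by
  simp only [IsGrey] at h0 h1
  ext; omega

/-- Let `m ≥ 5` and consider `K_{2,m}` with parts `{a, c} = {inl 0, inl 1}`
and `{u₁, …, u_m} = {inr 0, …, inr (m-1)}` (so `uᵢ = inr (i-1)`).  Color grey
the edges `a uᵢ` for `i ∉ {1, 3}` together with `c u₂` and `c u₃`, and color
all other edges black.  Then every color-preserving automorphism of this
2-colored graph fixes each of `a`, `c`, `u₁`, `u₂`, `u₃`. -/
theorem stmt_12 (m : ℕ) (hm : 5 ≤ m)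
    (φ : completeBipartiteGraph (Fin 2) (Fin m) ≃g completeBipartiteGraph (Fin 2) (Fin m))
    (hφ : IsColorPreserving (completeBipartiteGraph (Fin 2) (Fin m))
      (fun e => decide
        ((∃ i : Fin m, i ≠ ⟨0, by omega⟩ ∧ i ≠ ⟨2, by omega⟩ ∧
            e = s(Sum.inl 0, Sum.inr i)) ∨
          e = s(Sum.inl 1, Sum.inr ⟨1, by omega⟩) ∨
          e = s(Sum.inl 1, Sum.inr ⟨2, by omega⟩))) φ) :
    φ (Sum.inl 0) = Sum.inl 0 ∧ φ (Sum.inl 1) = Sum.inl 1 ∧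
      φ (Sum.inr ⟨0, by omega⟩) = Sum.inr ⟨0, by omega⟩ ∧
      φ (Sum.inr ⟨1, by omega⟩) = Sum.inr ⟨1, by omega⟩ ∧
      φ (Sum.inr ⟨2, by omega⟩) = Sum.inr ⟨2, by omega⟩ := by
  obtain ⟨σ, τ, hσ, hτ, hφστ⟩ :=
    completeBipartiteGraph.exists_iso_eq_sumMap (by simp only [Fintype.card_fin]; omega) φ
  have hgrey (x : Fin 2) (j : Fin m) : IsGrey (σ x) (τ j) ↔ IsGrey x j := by
    have := hφ (.inl x) (.inr j) (by simp)
    simp only [hφστ, Sum.map_inl, Sum.map_inr, decide_eq_decide] at this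
    rwa [isGrey_iff rfl rfl rfl, isGrey_iff rfl rfl rfl] at this
  have hσ0 : σ 0 = 0 := eq_zero_of_injective_isGrey hm hτ fun j => (hgrey 0 j).2
  have hσ1 : σ 1 = 1 := Fin.eq_one_of_ne_zero _ (hσ0 ▸ hσ.ne (by decide))
  have hτ_fix (j : Fin m) (hj : j.val < 3) : τ j = j :=
    eq_of_isGrey_iff hj (by simpa only [hσ0] using hgrey 0 j)
      (by simpa only [hσ1] using hgrey 1 j)
  simp [hφστ, hσ0, hσ1, hτ_fix]
end

section
/- Let G be a simple graph with pairwise distinct vertices a, b, c, v, x such that G contains the edges ab, bc, cv, va, and ax, and such that x and c are NOT adjacent in G. Color the four edges ax, ab, bc, and cv grey (they form a path x–a–b–c–v) and all other edges of G black. Then every color-preserving automorphism of this 2-colored graph fixes each of the vertices a, b, c, v, and x. -/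
section FivePath

variable {V : Type*} {u₀ u₁ u₂ u₃ u₄ u w : V}

def pathEdges (u₀ u₁ u₂ u₃ u₄ : V) : Set (Sym2 V) :=
  {s(u₀, u₁), s(u₁, u₂), s(u₂, u₃), s(u₃, u₄)}

lemma pathEdges_reverse : pathEdges u₄ u₃ u₂ u₁ u₀ = pathEdges u₀ u₁ u₂ u₃ u₄ := by
  ext e
  simp only [pathEdges, Set.mem_insert_iff, Set.mem_singleton_iff, Sym2.eq_swap]
  tauto

lemma eq_of_mem_pathEdges (h : s(u, w) ∈ pathEdges u₀ u₁ u₂ u₃ u₄) :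
    u = u₀ ∨ u = u₁ ∨ u = u₂ ∨ u = u₃ ∨ u = u₄ := by
  simp only [pathEdges, Set.mem_insert_iff, Set.mem_singleton_iff, Sym2.eq_iff] at h
  tauto

lemma pathEdges_neighbor_zero (hd : [u₀, u₁, u₂, u₃, u₄].Nodup)
    (h : s(u₀, w) ∈ pathEdges u₀ u₁ u₂ u₃ u₄) : w = u₁ := by
  simp only [pathEdges, Set.mem_insert_iff, Set.mem_singleton_iff, Sym2.eq_iff] at h
  simp only [List.nodup_cons, List.mem_cons, List.not_mem_nil] at hd
  aesop

lemma pathEdges_neighbor_one (hd : [u₀, u₁, u₂, u₃, u₄].Nodup)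
    (h : s(u₁, w) ∈ pathEdges u₀ u₁ u₂ u₃ u₄) : w = u₀ ∨ w = u₂ := by
  simp only [pathEdges, Set.mem_insert_iff, Set.mem_singleton_iff, Sym2.eq_iff] at h
  simp only [List.nodup_cons, List.mem_cons, List.not_mem_nil] at hd
  aesop

lemma pathEdges_neighbor_two (hd : [u₀, u₁, u₂, u₃, u₄].Nodup)
    (h : s(u₂, w) ∈ pathEdges u₀ u₁ u₂ u₃ u₄) : w = u₁ ∨ w = u₃ := by
  simp only [pathEdges, Set.mem_insert_iff, Set.mem_singleton_iff, Sym2.eq_iff] at h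
  simp only [List.nodup_cons, List.mem_cons, List.not_mem_nil] at hd
  aesop

lemma pathEdges_neighbor_three (hd : [u₀, u₁, u₂, u₃, u₄].Nodup)
    (h : s(u₃, w) ∈ pathEdges u₀ u₁ u₂ u₃ u₄) : w = u₂ ∨ w = u₄ :=
  (pathEdges_neighbor_one (List.nodup_reverse.2 hd) (pathEdges_reverse ▸ h)).symm

lemma apply_eq_of_mapsTo_pathEdges {w₀ w₁ w₂ w₃ w₄ : V} {ψ : V → V} (hψ : ψ.Injective)
    (hd : [u₀, u₁, u₂, u₃, u₄].Nodup) (hdw : [w₀, w₁, w₂, w₃, w₄].Nodup)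
    (hmaps : ∀ u w, s(u, w) ∈ pathEdges u₀ u₁ u₂ u₃ u₄ →
      s(ψ u, ψ w) ∈ pathEdges w₀ w₁ w₂ w₃ w₄)
    (h₀ : ψ u₀ = w₀) : ψ u₁ = w₁ ∧ ψ u₂ = w₂ ∧ ψ u₃ = w₃ ∧ ψ u₄ = w₄ := by
  simp only [List.nodup_cons, List.mem_cons, List.not_mem_nil] at hd
  have h₁ : ψ u₁ = w₁ :=
    pathEdges_neighbor_zero hdw (h₀ ▸ hmaps u₀ u₁ (by simp [pathEdges]))
  have h₂ : ψ u₂ = w₂ :=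
    (pathEdges_neighbor_one hdw (h₁ ▸ hmaps u₁ u₂ (by simp [pathEdges]))).resolve_left
      fun h => by have := hψ (h.trans h₀.symm); tauto
  have h₃ : ψ u₃ = w₃ :=
    (pathEdges_neighbor_two hdw (h₂ ▸ hmaps u₂ u₃ (by simp [pathEdges]))).resolve_left
      fun h => by have := hψ (h.trans h₁.symm); tauto
  have h₄ : ψ u₄ = w₄ :=
    (pathEdges_neighbor_three hdw (h₃ ▸ hmaps u₃ u₄ (by simp [pathEdges]))).resolve_left
      fun h => by have := hψ (h.trans h₂.symm); tauto
  exact ⟨h₁, h₂, h₃, h₄⟩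

lemma apply_zero_eq_zero_or_four_of_pathEdges {ψ : V ≃ V} (hd : [u₀, u₁, u₂, u₃, u₄].Nodup)
    (hψ : ∀ u w, s(ψ u, ψ w) ∈ pathEdges u₀ u₁ u₂ u₃ u₄ ↔ s(u, w) ∈ pathEdges u₀ u₁ u₂ u₃ u₄) :
    ψ u₀ = u₀ ∨ ψ u₀ = u₄ := by
  -- `u₀` has a single neighbour on the path, hence so does `ψ u₀`; the inner vertices have two.
  have eq_of_adj : ∀ p q, s(ψ u₀, p) ∈ pathEdges u₀ u₁ u₂ u₃ u₄ →
      s(ψ u₀, q) ∈ pathEdges u₀ u₁ u₂ u₃ u₄ → p = q := by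
    intro p q hp hq
    rw [← ψ.apply_symm_apply p, hψ] at hp
    rw [← ψ.apply_symm_apply q, hψ] at hq
    exact ψ.symm.injective
      ((pathEdges_neighbor_zero hd hp).trans (pathEdges_neighbor_zero hd hq).symm)
  simp only [List.nodup_cons, List.mem_cons, List.not_mem_nil] at hd
  rcases eq_of_mem_pathEdges ((hψ u₀ u₁).2 (by simp [pathEdges])) with h | h | h | h | h
  · exact .inl h
  · have := eq_of_adj u₀ u₂ (by simp [h, pathEdges]) (by simp [h, pathEdges]); tauto
  · have := eq_of_adj u₁ u₃ (by simp [h, pathEdges]) (by simp [h, pathEdges]); tauto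
  · have := eq_of_adj u₂ u₄ (by simp [h, pathEdges]) (by simp [h, pathEdges]); tauto
  · exact .inr h

end FivePath

theorem IsColorPreserving.map_mem_iff {V : Type*} {G : SimpleGraph V} {col : Sym2 V → Bool}
    {φ : G ≃g G} (hφ : IsColorPreserving G col φ) {S : Set (Sym2 V)} (hS : S ⊆ G.edgeSet)
    (hcol : ∀ e ∈ G.edgeSet, col e = true ↔ e ∈ S) (u w : V) :
    s(φ u, φ w) ∈ S ↔ s(u, w) ∈ S := by
  constructor
  · intro h
    have hadj : G.Adj u w := φ.map_adj_iff.1 (hS h)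
    rwa [← hcol _ hadj, ← hφ u w hadj, hcol _ (φ.map_adj_iff.2 hadj)]
  · intro h
    have hadj : G.Adj u w := hS h
    rwa [← hcol _ (φ.map_adj_iff.2 hadj), hφ u w hadj, hcol _ hadj]

/-- Let `G` be a simple graph with pairwise distinct vertices `a, b, c, v, x`,
containing the edges `ab`, `bc`, `cv`, `va`, `ax`, and with `x` and `c` not
adjacent.  Color the four edges `ax`, `ab`, `bc`, `cv` grey (a path
`x–a–b–c–v`) and all other edges black.  Then every color-preserving
automorphism of this 2-colored graph fixes each of `a`, `b`, `c`, `v`, `x`. -/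
theorem stmt_13 {V : Type*} [DecidableEq V] (G : SimpleGraph V)
    (a b c v x : V) (hdist : List.Pairwise (· ≠ ·) [a, b, c, v, x])
    (hab : G.Adj a b) (hbc : G.Adj b c) (hcv : G.Adj c v) (hva : G.Adj v a)
    (hax : G.Adj a x) (hxc : ¬ G.Adj x c)
    (φ : G ≃g G)
    (hφ : IsColorPreserving G
      (fun e => decide (e = s(a, x) ∨ e = s(a, b) ∨ e = s(b, c) ∨ e = s(c, v))) φ) :
    φ a = a ∧ φ b = b ∧ φ c = c ∧ φ v = v ∧ φ x = x := by
  have hd : [x, a, b, c, v].Nodup :=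
    (List.perm_append_comm (l₁ := [a, b, c, v]) (l₂ := [x])).nodup_iff.1 hdist
  have hgrey : pathEdges x a b c v ⊆ G.edgeSet := by
    simp [pathEdges, Set.insert_subset_iff, hab, hbc, hcv, hax.symm]
  have hpres := hφ.map_mem_iff hgrey fun e _ => by
    simp [pathEdges, Sym2.eq_swap (a := a) (b := x)]
  rcases apply_zero_eq_zero_or_four_of_pathEdges (ψ := φ.toEquiv) hd hpres with hx | hx
  · obtain ⟨ha, hb, hc, hv⟩ :=
      apply_eq_of_mapsTo_pathEdges φ.injective hd hd (fun u w => (hpres u w).2) hx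
    exact ⟨ha, hb, hc, hv, hx⟩
  · obtain ⟨ha, -, -, hv⟩ := apply_eq_of_mapsTo_pathEdges φ.injective hd
      (List.nodup_reverse.2 hd) (fun u w h => pathEdges_reverse ▸ (hpres u w).2 h) hx
    exact absurd (ha ▸ hv ▸ φ.map_adj_iff.2 hva) hxc
end
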